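/- For n : ℕ let v k = (1, 2^k) ∈ ℝ × ℝ and let Z n = { ∑_{k=0}^{n-1} t k • v k | t : Fin n → ℝ, ∀ k, 0 ≤ t k ∧ t k ≤ 1 } be the zonotope generated by the vectors (1, 2^k) for k < n. Then for every n ≥ 1, the set of extreme points of Z n (over ℝ) equals the union of the prefix sums and the suffix sums of the generators, namely { ∑_{k<j} (1, 2^k) | 0 ≤ j ≤ n } ∪ { ∑_{j ≤ k < n} (1, 2^k) | 0 ≤ j ≤ n }, and this set has exactly 2·n elements. (This makes precise the paper's claim that for n unknown inputs the set of possible value combinations of (x, y) in the Lola_𝔹/𝓛𝓐 counterexample is a polygon with 2n edges.) -/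

import Mathlib

/-!
Every point of the zonotope is `∑ t k • (1, 2 ^ k)` with `t ∈ [0, 1]ⁿ`. At an extreme point no
coefficient is fractional, since otherwise the point could move both ways along a generator.
Nor can `t` have a `1` before a `0` and also a `0` before a `1`: exchanging the first pair moves
the point up by `2 ^ j - 2 ^ i`, exchanging the second moves it down, and an extreme point cannot
admit both. So `t` is a monotone or antitone `0`/`1` vector and the point is a suffix or a prefix
sum. Conversely, the prefix sum of length `j` is the unique maximiser of `3 · 2 ^ j · x - 4 · y`
on the zonotope, and the suffix sum starting at `j` that of its negative.

The prefix sums are `(j, 2 ^ j - 1)` and the suffix sums `(n - j, 2 ^ n - 2 ^ j)`; a suffix sum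
equals a prefix sum only at the two endpoints `0` and `(n, 2 ^ n - 1)`, which leaves `2 n` points.
-/

open Finset

section Zonotope

variable {ι E : Type*} [Fintype ι] [AddCommGroup E] [Module ℝ E]

def zonotope (v : ι → E) : Set E :=
  {z | ∃ t : ι → ℝ, (∀ k, 0 ≤ t k ∧ t k ≤ 1) ∧ z = ∑ k, t k • v k}

lemma eq_zero_of_add_smul_mem_of_sub_smul_mem {A : Set E} {z u : E} {a b : ℝ}
    (hz : z ∈ A.extremePoints ℝ) (ha : 0 < a) (hb : 0 < b)
    (hadd : z + a • u ∈ A) (hsub : z - b • u ∈ A) : u = 0 := by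
  have hseg : z ∈ openSegment ℝ (z + a • u) (z - b • u) :=
    ⟨b / (a + b), a / (a + b), by positivity, by positivity, by field_simp; ring,
      by match_scalars <;> field_simp <;> ring⟩
  have hau : z + a • u = z := hz.2 hadd hsub hseg
  simpa [ha.ne'] using hau

lemma mem_extremePoints_of_forall_ne_lt {A : Set E} {p : E} (φ : E →ₗ[ℝ] ℝ) (hp : p ∈ A)
    (hmax : ∀ x ∈ A, x ≠ p → φ x < φ p) : p ∈ A.extremePoints ℝ := by
  refine ⟨hp, fun x hx y hy ⟨a, b, ha, hb, hab, hxy⟩ => ?_⟩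
  by_contra hne
  have hy : φ y ≤ φ p := by
    rcases eq_or_ne y p with rfl | hne
    · exact le_rfl
    · exact (hmax y hy hne).le
  have hφp : φ p = a * φ x + b * φ y := by simp [← hxy]
  have hsum : φ p = a * φ p + b * φ p := by rw [← add_mul, hab, one_mul]
  linarith [mul_lt_mul_of_pos_left (hmax x hx hne) ha, mul_le_mul_of_nonneg_left hy hb.le]

variable {v : ι → E} {t : ι → ℝ}

lemma add_sum_smul_mem_zonotope {d : ι → ℝ} (h : ∀ k, 0 ≤ t k + d k ∧ t k + d k ≤ 1) :
    ∑ k, t k • v k + ∑ k, d k • v k ∈ zonotope v :=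
  ⟨t + d, h, by simp [add_smul, sum_add_distrib]⟩

lemma add_smul_mem_zonotope (ht : ∀ k, 0 ≤ t k ∧ t k ≤ 1) {i : ι} {s : ℝ}
    (hs : 0 ≤ t i + s ∧ t i + s ≤ 1) : ∑ k, t k • v k + s • v i ∈ zonotope v := by
  classical
  set d : ι → ℝ := Pi.single i s
  have hd : ∀ k, 0 ≤ t k + d k ∧ t k + d k ≤ 1 := by
    intro k
    rcases eq_or_ne k i with rfl | hk
    · simpa [d] using hs
    · simpa [d, hk] using ht k
  simpa [d, Pi.single_apply, ite_smul] using add_sum_smul_mem_zonotope (v := v) hd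

lemma add_sub_mem_zonotope_of_eq_one_of_eq_zero (ht : ∀ k, 0 ≤ t k ∧ t k ≤ 1) {i j : ι}
    (hi : t i = 1) (hj : t j = 0) : ∑ k, t k • v k + (v j - v i) ∈ zonotope v := by
  classical
  have hij : i ≠ j := by rintro rfl; simp_all
  set d : ι → ℝ := Pi.single j 1 - Pi.single i 1
  have hd : ∀ k, 0 ≤ t k + d k ∧ t k + d k ≤ 1 := by
    intro k
    rcases eq_or_ne k i with rfl | hki
    · simp [d, hij, hi]
    rcases eq_or_ne k j with rfl | hkj
    · simp [d, hki, hj]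
    simpa [d, hki, hkj] using ht k
  simpa [d, Pi.single_apply, ite_smul, sub_smul, sum_sub_distrib]
    using add_sum_smul_mem_zonotope (v := v) hd

lemma eq_zero_or_eq_one_of_mem_extremePoints_zonotope (ht : ∀ k, 0 ≤ t k ∧ t k ≤ 1)
    (hext : ∑ k, t k • v k ∈ (zonotope v).extremePoints ℝ) {i : ι} (hv : v i ≠ 0) :
    t i = 0 ∨ t i = 1 := by
  by_contra! h
  have h0 : 0 < t i := lt_of_le_of_ne (ht i).1 (Ne.symm h.1)
  have h1 : t i < 1 := lt_of_le_of_ne (ht i).2 h.2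
  set ε := min (t i) (1 - t i)
  have hε : 0 < ε := lt_min h0 (by linarith)
  have hadd := add_smul_mem_zonotope (v := v) ht (i := i) (s := ε)
    ⟨by positivity, by linarith [min_le_right (t i) (1 - t i)]⟩
  have hsub := add_smul_mem_zonotope (v := v) ht (i := i) (s := -ε)
    ⟨by linarith [min_le_left (t i) (1 - t i)], by linarith⟩
  rw [neg_smul, ← sub_eq_add_neg] at hsub
  exact hv (eq_zero_of_add_smul_mem_of_sub_smul_mem hext hε hε hadd hsub)

lemma sum_smul_mem_extremePoints_zonotope (φ : E →ₗ[ℝ] ℝ)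
    (ht : ∀ k, 0 < φ (v k) ∧ t k = 1 ∨ φ (v k) < 0 ∧ t k = 0) :
    ∑ k, t k • v k ∈ (zonotope v).extremePoints ℝ := by
  refine mem_extremePoints_of_forall_ne_lt φ ⟨t, fun k => ?_, rfl⟩ ?_
  · rcases ht k with ⟨-, h⟩ | ⟨-, h⟩ <;> simp [h]
  rintro _ ⟨s, hs, rfl⟩ hne
  have hle : ∀ k, s k * φ (v k) ≤ t k * φ (v k) := fun k => by
    rcases ht k with ⟨hφ, h⟩ | ⟨hφ, h⟩ <;> rw [h] <;> nlinarith [hs k]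
  obtain ⟨k, hk⟩ : ∃ k, s k ≠ t k := by
    by_contra! h
    exact hne (by simp [h])
  have hlt : s k * φ (v k) < t k * φ (v k) := by
    rcases ht k with ⟨hφ, h⟩ | ⟨hφ, h⟩ <;> rw [h] at hk ⊢
    · nlinarith [lt_of_le_of_ne (hs k).2 hk]
    · nlinarith [lt_of_le_of_ne (hs k).1 (Ne.symm hk)]
  simpa using Finset.sum_lt_sum (fun k _ => hle k) ⟨k, mem_univ k, hlt⟩

end Zonotope

section Threshold

variable {n : ℕ}

lemma sum_ite_mem_smul_of_subset_range {M : Type*} [AddCommGroup M] [Module ℝ M]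
    {s : Finset ℕ} (hs : s ⊆ range n) (f : ℕ → M) :
    ∑ k : Fin n, (if (k : ℕ) ∈ s then (1 : ℝ) else 0) • f k = ∑ k ∈ s, f k := by
  classical
  rw [Fin.sum_univ_eq_sum_range (fun k => (if k ∈ s then (1 : ℝ) else 0) • f k)]
  simp only [ite_smul, one_smul, zero_smul]
  rw [sum_ite_mem, inter_eq_right.2 hs]

lemma exists_eq_indicator_range_of_antitone {t : Fin n → ℝ} (h01 : ∀ k, t k = 0 ∨ t k = 1)
    (ht : Antitone t) : ∃ j ≤ n, ∀ k : Fin n, t k = if (k : ℕ) ∈ range j then 1 else 0 := by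
  classical
  have hP : ∃ m, ∀ k : Fin n, m ≤ (k : ℕ) → t k = 0 :=
    ⟨n, fun k hk => absurd k.isLt (by omega)⟩
  refine ⟨Nat.find hP, Nat.find_min' hP fun k hk => absurd k.isLt (by omega), fun k => ?_⟩
  simp only [mem_range]
  split_ifs with hk
  · obtain ⟨k', hkk', hk'⟩ : ∃ k' : Fin n, (k : ℕ) ≤ k' ∧ t k' ≠ 0 := by
      simpa using Nat.find_min hP hk
    have hle : t k' ≤ t k := ht (Fin.le_def.2 hkk')
    have hk'1 : t k' = 1 := (h01 k').resolve_left hk'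
    exact (h01 k).resolve_left fun h => by linarith
  · exact Nat.find_spec hP k (not_lt.1 hk)

lemma exists_eq_indicator_Ico_of_monotone {t : Fin n → ℝ} (h01 : ∀ k, t k = 0 ∨ t k = 1)
    (ht : Monotone t) : ∃ j ≤ n, ∀ k : Fin n, t k = if (k : ℕ) ∈ Ico j n then 1 else 0 := by
  obtain ⟨j, hj, h⟩ := exists_eq_indicator_range_of_antitone (t := fun k => 1 - t k)
    (fun k => by rcases h01 k with h | h <;> simp [h])
    (fun a b hab => sub_le_sub_left (ht hab) 1)
  refine ⟨j, hj, fun k => ?_⟩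
  have hk := h k
  simp only [mem_range, mem_Ico, k.isLt, and_true] at hk ⊢
  split_ifs at hk ⊢ <;> first | omega | linarith

end Threshold

lemma exists_prefix_or_suffix_of_mem_extremePoints_zonotope {n : ℕ} {w : ℕ → ℝ}
    (hw : StrictMono w) {z : ℝ × ℝ}
    (hz : z ∈ (zonotope fun k : Fin n => ((1 : ℝ), w k)).extremePoints ℝ) :
    (∃ j ≤ n, z = ∑ k ∈ range j, ((1 : ℝ), w k)) ∨
      ∃ j ≤ n, z = ∑ k ∈ Ico j n, ((1 : ℝ), w k) := by
  obtain ⟨t, ht, rfl⟩ := hz.1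
  have h01 : ∀ k, t k = 0 ∨ t k = 1 := fun k =>
    eq_zero_or_eq_one_of_mem_extremePoints_zonotope ht hz (by simp)
  have hexchange : ∀ i j : Fin n, t j < t i →
      ∑ k, t k • ((1 : ℝ), w k) + (w j - w i) • ((0 : ℝ), (1 : ℝ)) ∈
        zonotope fun k : Fin n => ((1 : ℝ), w k) := by
    intro i j hij
    have hi : t i = 1 := (h01 i).resolve_left fun h => by linarith [(ht j).1]
    have hj : t j = 0 := (h01 j).resolve_right fun h => by linarith [(ht i).2]
    convert add_sub_mem_zonotope_of_eq_one_of_eq_zero ht hi hj using 2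
    simp
  have hmono : Monotone t ∨ Antitone t := by
    by_contra! h
    obtain ⟨i, j, hij, hji⟩ := by simpa [monotone_iff_forall_lt] using h.1
    obtain ⟨i', j', hij', hji'⟩ := by simpa [antitone_iff_forall_lt] using h.2
    have hup := hexchange i j hji
    have hdown := hexchange j' i' hji'
    rw [← neg_sub, neg_smul, ← sub_eq_add_neg] at hdown
    have := eq_zero_of_add_smul_mem_of_sub_smul_mem hz (sub_pos.2 (hw hij))
      (sub_pos.2 (hw hij')) hup hdown
    simp at this
  rcases hmono with hm | ha
  · obtain ⟨j, hj, h⟩ := exists_eq_indicator_Ico_of_monotone h01 hm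
    refine .inr ⟨j, hj, ?_⟩
    simp_rw [h]
    exact sum_ite_mem_smul_of_subset_range (fun k hk => mem_range.2 (mem_Ico.1 hk).2)
      fun k => ((1 : ℝ), w k)
  · obtain ⟨j, hj, h⟩ := exists_eq_indicator_range_of_antitone h01 ha
    refine .inl ⟨j, hj, ?_⟩
    simp_rw [h]
    exact sum_ite_mem_smul_of_subset_range (range_subset_range.2 hj) fun k => ((1 : ℝ), w k)

lemma sum_range_one_two_pow (j : ℕ) :
    ∑ k ∈ range j, ((1 : ℝ), (2 : ℝ) ^ k) = ((j : ℝ), (2 : ℝ) ^ j - 1) := by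
  induction j with
  | zero => simp [Prod.ext_iff]
  | succ j ih =>
    rw [sum_range_succ, ih, Prod.mk_add_mk]
    push_cast
    ring_nf

lemma sum_Ico_one_two_pow {j n : ℕ} (hj : j ≤ n) :
    ∑ k ∈ Ico j n, ((1 : ℝ), (2 : ℝ) ^ k) = ((n : ℝ) - j, (2 : ℝ) ^ n - 2 ^ j) := by
  rw [sum_Ico_eq_sub _ hj, sum_range_one_two_pow, sum_range_one_two_pow, Prod.mk_sub_mk]
  ring_nf

lemma sum_range_and_sum_Ico_mem_extremePoints_zonotope {n j : ℕ} (hj : j ≤ n) :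
    ∑ k ∈ range j, ((1 : ℝ), (2 : ℝ) ^ k) ∈
        (zonotope fun k : Fin n => ((1 : ℝ), (2 : ℝ) ^ (k : ℕ))).extremePoints ℝ ∧
      ∑ k ∈ Ico j n, ((1 : ℝ), (2 : ℝ) ^ k) ∈
        (zonotope fun k : Fin n => ((1 : ℝ), (2 : ℝ) ^ (k : ℕ))).extremePoints ℝ := by
  -- the slope `3 · 2 ^ j / 4` lies strictly between `2 ^ (j - 1)` and `2 ^ j`
  set φ : ℝ × ℝ →ₗ[ℝ] ℝ :=
    (3 * 2 ^ j : ℝ) • LinearMap.fst ℝ ℝ ℝ - (4 : ℝ) • LinearMap.snd ℝ ℝ ℝ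
  have hsep : ∀ k : ℕ, (k < j → 0 < φ (1, 2 ^ k)) ∧ (j ≤ k → φ (1, 2 ^ k) < 0) := by
    intro k
    simp only [φ, LinearMap.sub_apply, LinearMap.smul_apply, LinearMap.fst_apply,
      LinearMap.snd_apply, smul_eq_mul]
    constructor
    · intro hk
      have : (2 : ℝ) ^ k * 2 ≤ 2 ^ j := by
        rw [← pow_succ]
        exact pow_le_pow_right₀ one_le_two hk
      nlinarith [pow_pos (two_pos (α := ℝ)) j]
    · intro hk
      have : (2 : ℝ) ^ j ≤ 2 ^ k := pow_le_pow_right₀ one_le_two hk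
      nlinarith [pow_pos (two_pos (α := ℝ)) j]
  constructor
  · rw [← sum_ite_mem_smul_of_subset_range (range_subset_range.2 hj)]
    refine sum_smul_mem_extremePoints_zonotope φ fun k => ?_
    by_cases hk : (k : ℕ) < j
    · simp [hk, (hsep k).1 hk]
    · simp [hk, (hsep k).2 (not_lt.1 hk)]
  · rw [← sum_ite_mem_smul_of_subset_range (fun k hk => mem_range.2 (mem_Ico.1 hk).2)]
    refine sum_smul_mem_extremePoints_zonotope (-φ) fun k => ?_
    by_cases hk : (k : ℕ) < j
    · simp [hk, (hsep k).1 hk]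
    · simp [not_lt.1 hk, (hsep k).2 (not_lt.1 hk)]

lemma extremePoints_zonotope_one_two_pow (n : ℕ) :
    (zonotope fun k : Fin n => ((1 : ℝ), (2 : ℝ) ^ (k : ℕ))).extremePoints ℝ =
      {z : ℝ × ℝ | ∃ j ≤ n, z = ∑ k ∈ range j, ((1 : ℝ), (2 : ℝ) ^ k)} ∪
        {z : ℝ × ℝ | ∃ j ≤ n, z = ∑ k ∈ Ico j n, ((1 : ℝ), (2 : ℝ) ^ k)} := by
  refine Set.Subset.antisymm (fun z hz => ?_) ?_
  · exact exists_prefix_or_suffix_of_mem_extremePoints_zonotope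
      (pow_right_strictMono₀ one_lt_two) hz
  · rintro _ (⟨j, hj, rfl⟩ | ⟨j, hj, rfl⟩)
    exacts [(sum_range_and_sum_Ico_mem_extremePoints_zonotope hj).1,
      (sum_range_and_sum_Ico_mem_extremePoints_zonotope hj).2]

lemma sum_range_ne_sum_Ico_one_two_pow {i j n : ℕ} (hi : i < n) (hj : j < n) :
    ∑ k ∈ range i, ((1 : ℝ), (2 : ℝ) ^ k) ≠ ∑ k ∈ Ico j n, ((1 : ℝ), (2 : ℝ) ^ k) := by
  rw [sum_range_one_two_pow, sum_Ico_one_two_pow hj.le]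
  intro h
  obtain ⟨h1, h2⟩ := Prod.mk.inj h
  have hnij : n = i + j := by
    have : (n : ℝ) = i + j := by linarith
    exact_mod_cast this
  -- with `n = i + j`, the second coordinates say `(2 ^ i - 1) * (2 ^ j - 1) = 0`
  have h2n : (2 : ℝ) ^ n = 2 ^ i * 2 ^ j := by rw [hnij, pow_add]
  have hi2 : (2 : ℝ) ≤ 2 ^ i := le_self_pow₀ one_le_two (by omega)
  have hj2 : (2 : ℝ) ≤ 2 ^ j := le_self_pow₀ one_le_two (by omega)
  nlinarith

lemma ncard_prefix_union_suffix_one_two_pow {n : ℕ} (hn : 1 ≤ n) :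
    ({z : ℝ × ℝ | ∃ j ≤ n, z = ∑ k ∈ range j, ((1 : ℝ), (2 : ℝ) ^ k)} ∪
      {z : ℝ × ℝ | ∃ j ≤ n, z = ∑ k ∈ Ico j n, ((1 : ℝ), (2 : ℝ) ^ k)}).ncard = 2 * n := by
  set P : ℕ → ℝ × ℝ := fun j => ∑ k ∈ range j, ((1 : ℝ), (2 : ℝ) ^ k)
  set Q : ℕ → ℝ × ℝ := fun j => ∑ k ∈ Ico j n, ((1 : ℝ), (2 : ℝ) ^ k)
  have hset : {z : ℝ × ℝ | ∃ j ≤ n, z = P j} ∪ {z | ∃ j ≤ n, z = Q j} =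
      ↑((range n).image P ∪ (range n).image Q) := by
    ext z
    simp only [Set.mem_union, Set.mem_ofPred_eq, coe_union, coe_image, coe_range,
      Set.mem_image, Set.mem_Iio]
    constructor
    · rintro (⟨j, hj, rfl⟩ | ⟨j, hj, rfl⟩)
      · rcases hj.lt_or_eq with hj | rfl
        · exact .inl ⟨j, hj, rfl⟩
        · exact .inr ⟨0, hn, by simp only [P, Q]; rw [range_eq_Ico]⟩
      · rcases hj.lt_or_eq with hj | rfl
        · exact .inr ⟨j, hj, rfl⟩
        · exact .inl ⟨0, hn, by simp [P, Q]⟩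
    · rintro (⟨j, hj, rfl⟩ | ⟨j, hj, rfl⟩)
      exacts [.inl ⟨j, hj.le, rfl⟩, .inr ⟨j, hj.le, rfl⟩]
  have hdisj : Disjoint ((range n).image P) ((range n).image Q) := by
    simp only [disjoint_left, mem_image, mem_range, not_exists, not_and]
    rintro _ ⟨i, hi, rfl⟩ j hj
    exact (sum_range_ne_sum_Ico_one_two_pow hi hj).symm
  have hP : Function.Injective P := fun a b h => by
    have := congrArg Prod.fst h
    simp only [P, sum_range_one_two_pow] at this
    exact_mod_cast this
  have hQ : Set.InjOn Q (range n) := fun a ha b hb h => by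
    have := congrArg Prod.fst h
    simp only [Q, sum_Ico_one_two_pow (mem_range.1 ha).le, sum_Ico_one_two_pow (mem_range.1 hb).le,
      sub_right_inj] at this
    exact_mod_cast this
  rw [hset, Set.ncard_coe_finset, card_union_of_disjoint hdisj, card_image_of_injective _ hP,
    card_image_of_injOn hQ, card_range, two_mul]

/-- For the zonotope `Z n` generated by the vectors `(1, 2^k)`, `k < n`, the extreme
points are exactly the prefix sums and the suffix sums of the generators, and there
are exactly `2·n` of them. -/
theorem zonotope_pow2_extremePoints (n : ℕ) (hn : 1 ≤ n) :
    Set.extremePoints ℝ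
        { z : ℝ × ℝ | ∃ t : Fin n → ℝ, (∀ k, 0 ≤ t k ∧ t k ≤ 1) ∧
          z = ∑ k, t k • (((1 : ℝ), (2 : ℝ) ^ (k : ℕ))) }
      = ({ z : ℝ × ℝ | ∃ j ≤ n, z = ∑ k ∈ Finset.range j, ((1 : ℝ), (2 : ℝ) ^ k) } ∪
         { z : ℝ × ℝ | ∃ j ≤ n, z = ∑ k ∈ Finset.Ico j n, ((1 : ℝ), (2 : ℝ) ^ k) }) ∧
    (Set.extremePoints ℝ
        { z : ℝ × ℝ | ∃ t : Fin n → ℝ, (∀ k, 0 ≤ t k ∧ t k ≤ 1) ∧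
          z = ∑ k, t k • (((1 : ℝ), (2 : ℝ) ^ (k : ℕ))) }).ncard = 2 * n := by
  have h := extremePoints_zonotope_one_two_pow n
  exact ⟨h, h ▸ ncard_prefix_union_suffix_one_two_pow hn⟩
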